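/- arXiv:2209.01805 — 2 statements merged into one kernel-verified Lean document; each statement's English description precedes it below -/
import Mathlib

section
/- Let (Ω, F, P) be a probability space, H ⊆ F a sub-σ-algebra, ν : Ω → ℝ with ν^q integrable for 1 ≤ q ≤ r, and let r, k be integers with 1 ≤ k ≤ r. Write m_q := E[ν^q | H] for 0 ≤ q ≤ r (so m₀ = 1) and assume m_r ≠ 0 almost surely and that 1/m_r and all products below are integrable. Define H-measurable b̄_r := 1/m_r and, recursively for q = k−1 down to 1, b_q := −b̄_r·C(r,q)·m_{r−q} − ∑_{u=1}^{k−1−q} b_{q+u}·C(q+u,q)·m_u. Then for every integer q with 1 ≤ q ≤ k−1, E[ b̄_r·C(r,q)·ν^{r−q} + ∑_{u=q}^{k−1} b_u·C(u,q)·ν^{u−q} | H ] = 0 almost surely. -/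
/-!
Conditioning on `H` pulls the `H`-measurable coefficients out of each term, turning `ν ^ p`
into `m p`. Splitting off the `u = q` term of the sum, where `C(q, q) · m 0 = 1`, the resulting
identity is exactly the recursion defining `b q`. The coefficients `b q` are `H`-measurable by
downward induction along that recursion.
-/

open MeasureTheory Finset

theorem Finset.sum_Icc_eq_add_sum_Icc_one {M : Type*} [AddCommMonoid M] (f : ℕ → M) {q n : ℕ}
    (h : q ≤ n) : ∑ u ∈ Icc q n, f u = f q + ∑ u ∈ Icc 1 (n - q), f (q + u) := by
  rw [← add_sum_Ioc_eq_sum_Icc h, ← Icc_add_one_left_eq_Ioc, ← Nat.add_sub_cancel' h,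
    ← map_add_left_Icc, sum_map, Nat.add_sub_cancel_left]
  rfl

theorem add_sum_Icc_choose_mul_eq_zero {t : ℝ} {b m : ℕ → ℝ} {q n : ℕ} (hq : q ≤ n)
    (hm0 : m 0 = 1)
    (hb : b q = -t - ∑ u ∈ Icc 1 (n - q), b (q + u) * ((q + u).choose q : ℝ) * m u) :
    t + ∑ u ∈ Icc q n, b u * (u.choose q : ℝ) * m (u - q) = 0 := by
  rw [sum_Icc_eq_add_sum_Icc_one _ hq, Nat.choose_self, Nat.sub_self, hm0]
  simp only [Nat.add_sub_cancel_left, Nat.cast_one, mul_one, hb]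
  ring

section

variable {Ω : Type*} {F H : MeasurableSpace Ω} {μ : Measure[F] Ω}

theorem stronglyMeasurable_of_descending_recursion {n : ℕ} {a m b : ℕ → Ω → ℝ}
    {c : ℕ → ℕ → ℝ} (ha : ∀ q, 1 ≤ q → q ≤ n → StronglyMeasurable[H] (a q))
    (hm : ∀ u, u ≤ n → StronglyMeasurable[H] (m u))
    (hb : ∀ q, 1 ≤ q → q ≤ n →
      b q = fun ω => a q ω - ∑ u ∈ Icc 1 (n - q), b (q + u) ω * c q u * m u ω) :
    ∀ q, 1 ≤ q → q ≤ n → StronglyMeasurable[H] (b q) := by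
  suffices ∀ d q, n - q = d → 1 ≤ q → q ≤ n → StronglyMeasurable[H] (b q) from
    fun q => this _ q rfl
  intro d
  induction d using Nat.strong_induction_on with
  | _ d ih =>
    intro q hd hq1 hqn
    rw [hb q hq1 hqn]
    refine (ha q hq1 hqn).sub (Finset.stronglyMeasurable_fun_sum _ fun u hu => ?_)
    obtain ⟨hu1, hu2⟩ := mem_Icc.mp hu
    exact ((ih _ (by omega) (q + u) rfl (by omega) (by omega)).mul_const _).mul (hm u (by omega))

theorem condExp_finsetSum_mul_of_stronglyMeasurable_left {ι : Type*} (s : Finset ι)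
    {f g : ι → Ω → ℝ} (hf : ∀ i ∈ s, StronglyMeasurable[H] (f i))
    (hfg : ∀ i ∈ s, Integrable (fun ω => f i ω * g i ω) μ) (hg : ∀ i ∈ s, Integrable (g i) μ) :
    μ[fun ω => ∑ i ∈ s, f i ω * g i ω|H] =ᵐ[μ] fun ω => ∑ i ∈ s, f i ω * μ[g i|H] ω := by
  have hsum : (fun ω => ∑ i ∈ s, f i ω * g i ω) = ∑ i ∈ s, fun ω => f i ω * g i ω := by
    ext ω; simp
  rw [hsum]
  refine (condExp_finsetSum hfg H).trans ((eventuallyEq_sum fun i hi =>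
    condExp_mul_of_stronglyMeasurable_left (hf i hi) (hfg i hi) (hg i hi)).trans ?_)
  exact .of_eq (by ext ω; simp)

end

theorem rcl_orthogonality_system_general {Ω : Type*} {F : MeasurableSpace Ω}
    (μ : Measure Ω) [IsProbabilityMeasure μ]
    (H : MeasurableSpace Ω) (hH : H ≤ F)
    (ν : Ω → ℝ) (r k : ℕ) (hkr : k ≤ r)
    (hint : ∀ q, 1 ≤ q → q ≤ r → Integrable (fun ω => ν ω ^ q) μ)
    (m : ℕ → Ω → ℝ) (hm : ∀ q, q ≤ r → m q = μ[fun ω => ν ω ^ q|H])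
    (b : ℕ → Ω → ℝ)
    (hb : ∀ q, 1 ≤ q → q ≤ k - 1 → b q = fun ω =>
      -(m r ω)⁻¹ * (r.choose q : ℝ) * m (r - q) ω
        - ∑ u ∈ Finset.Icc 1 (k - 1 - q), b (q + u) ω * ((q + u).choose q : ℝ) * m u ω)
    (hint1 : ∀ q, 1 ≤ q → q ≤ k - 1 →
      Integrable (fun ω => (m r ω)⁻¹ * (r.choose q : ℝ) * ν ω ^ (r - q)) μ)
    (hint2 : ∀ q u, 1 ≤ q → q ≤ u → u ≤ k - 1 →
      Integrable (fun ω => b u ω * (u.choose q : ℝ) * ν ω ^ (u - q)) μ) :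
    ∀ q, 1 ≤ q → q ≤ k - 1 →
      μ[fun ω => (m r ω)⁻¹ * (r.choose q : ℝ) * ν ω ^ (r - q)
          + ∑ u ∈ Finset.Icc q (k - 1), b u ω * (u.choose q : ℝ) * ν ω ^ (u - q)|H]
        =ᵐ[μ] 0 := by
  intro q hq1 hq2
  have hm_sm (u : ℕ) (hu : u ≤ r) : StronglyMeasurable[H] (m u) := by
    rw [hm u hu]; exact stronglyMeasurable_condExp
  have hm0 : m 0 = 1 := by
    simp only [hm 0 (Nat.zero_le r), pow_zero]; exact condExp_const hH 1
  have hpow (p : ℕ) (hp : p ≤ r) : Integrable (fun ω => ν ω ^ p) μ := by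
    rcases p.eq_zero_or_pos with rfl | hp0
    · simp
    · exact hint p hp0 hp
  have hinv_sm : StronglyMeasurable[H] fun ω => (m r ω)⁻¹ :=
    (hm_sm r le_rfl).measurable.inv.stronglyMeasurable
  have hb_sm := stronglyMeasurable_of_descending_recursion
    (fun q _ _ => (hinv_sm.neg.mul_const _).mul (hm_sm (r - q) (Nat.sub_le r q)))
    (fun u hu => hm_sm u (by omega)) hb
  have hfirst := condExp_mul_of_stronglyMeasurable_left (hinv_sm.mul_const (r.choose q : ℝ))
    (hint1 q hq1 hq2) (hpow (r - q) (Nat.sub_le r q))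
  have hsum := condExp_finsetSum_mul_of_stronglyMeasurable_left (μ := μ) (H := H)
    (Icc q (k - 1)) (f := fun u ω => b u ω * (u.choose q : ℝ)) (g := fun u ω => ν ω ^ (u - q))
    (fun u hu => (hb_sm u (by grind) (mem_Icc.mp hu).2).mul_const _)
    (fun u hu => hint2 q u hq1 (mem_Icc.mp hu).1 (mem_Icc.mp hu).2)
    (fun u hu => hpow (u - q) (by grind))
  filter_upwards [condExp_add (hint1 q hq1 hq2) (integrable_finsetSum _ fun u hu =>
    hint2 q u hq1 (mem_Icc.mp hu).1 (mem_Icc.mp hu).2) H, hfirst, hsum] with ω h h1 h2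
  have hsum_m : ∑ u ∈ Icc q (k - 1), b u ω * (u.choose q : ℝ) * μ[fun ω => ν ω ^ (u - q)|H] ω
      = ∑ u ∈ Icc q (k - 1), b u ω * (u.choose q : ℝ) * m (u - q) ω :=
    sum_congr rfl fun u hu => by rw [hm (u - q) (by grind)]
  refine h.trans ((congrArg₂ (· + ·) h1 (h2.trans hsum_m)).trans ?_)
  rw [Pi.mul_apply, ← hm (r - q) (Nat.sub_le r q)]
  refine add_sum_Icc_choose_mul_eq_zero (m := fun p => m p ω) hq2 (congrFun hm0 ω) ?_
  rw [congrFun (hb q hq1 hq2) ω]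
  ring

/-- The orthogonality system (**) in the proof of Theorem 1: with `m_q = E[ν^q | H]`,
`b̄_r = 1/m_r`, and `b_q` defined by the descending recursion, the mixed-derivative
orthogonality conditions hold: for `1 ≤ q ≤ k-1`,
`E[ b̄_r·C(r,q)·ν^{r-q} + ∑_{u=q}^{k-1} b_u·C(u,q)·ν^{u-q} | H ] = 0` a.s. -/
theorem rcl_orthogonality_system {Ω : Type*} {F : MeasurableSpace Ω}
    (μ : Measure Ω) [IsProbabilityMeasure μ]
    (H : MeasurableSpace Ω) (hH : H ≤ F)
    (ν : Ω → ℝ) (r k : ℕ) (hk1 : 1 ≤ k) (hkr : k ≤ r)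
    (hint : ∀ q, 1 ≤ q → q ≤ r → Integrable (fun ω => ν ω ^ q) μ)
    (m : ℕ → Ω → ℝ) (hm : ∀ q, q ≤ r → m q = μ[fun ω => ν ω ^ q|H])
    (hmr : ∀ᵐ ω ∂μ, m r ω ≠ 0)
    (hinv : Integrable (fun ω => (m r ω)⁻¹) μ)
    (b : ℕ → Ω → ℝ)
    (hb : ∀ q, 1 ≤ q → q ≤ k - 1 → b q = fun ω =>
      -(m r ω)⁻¹ * (r.choose q : ℝ) * m (r - q) ω
        - ∑ u ∈ Finset.Icc 1 (k - 1 - q), b (q + u) ω * ((q + u).choose q : ℝ) * m u ω)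
    (hint1 : ∀ q, 1 ≤ q → q ≤ k - 1 →
      Integrable (fun ω => (m r ω)⁻¹ * (r.choose q : ℝ) * ν ω ^ (r - q)) μ)
    (hint2 : ∀ q u, 1 ≤ q → q ≤ u → u ≤ k - 1 →
      Integrable (fun ω => b u ω * (u.choose q : ℝ) * ν ω ^ (u - q)) μ) :
    ∀ q, 1 ≤ q → q ≤ k - 1 →
      μ[fun ω => (m r ω)⁻¹ * (r.choose q : ℝ) * ν ω ^ (r - q)
          + ∑ u ∈ Finset.Icc q (k - 1), b u ω * (u.choose q : ℝ) * ν ω ^ (u - q)|H]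
        =ᵐ[μ] 0 :=
  rcl_orthogonality_system_general μ H hH ν r k hkr hint m hm b hb hint1 hint2
end

section
/- Let (Ω, F, P) be a probability space, let Z : Ω → E and D : Ω → S be random elements, and let Y : Ω → ℝ be a random variable such that Y and D are conditionally independent given the σ-algebra σ(Z) generated by Z. Let g : E → ℝ be measurable and let r ≥ 1 be an integer such that (Y − g(Z))^r is integrable. Then E[(Y − g(Z))^r | σ(D) ⊔ σ(Z)] = E[(Y − g(Z))^r | σ(Z)] almost surely; in particular, the conditional r-th moment of the residual ξ = Y − g(Z) given (D, Z) does not depend on D. -/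
/-!
Write `𝓩 = σ(Z)`. Conditional independence of `σ(Y)` and `σ(D)` given `𝓩` upgrades to conditional
independence of `σ(Y) ⊔ 𝓩` and `σ(D)`, because the indicator of an event `B ∈ 𝓩` can be pulled out
of `E[· | 𝓩]`. Hence `P(A | σ(Y) ⊔ 𝓩) = P(A | 𝓩)` for every `A ∈ σ(D)`. It then suffices to compare
integrals over the π-system of sets `A ∩ B`, `A ∈ σ(D)`, `B ∈ 𝓩`: for `f = (Y - g(Z))^r`, which is
`σ(Y) ⊔ 𝓩`-measurable,

    ∫_{A ∩ B} f = ∫ 1_B f P(A | σ(Y) ⊔ 𝓩) = ∫ 1_B f P(A | 𝓩)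
                = ∫ 1_B E[f | 𝓩] P(A | 𝓩) = ∫_{A ∩ B} E[f | 𝓩],

each step moving a factor measurable for the conditioning σ-algebra in or out of a conditional
expectation.
-/

open MeasureTheory ProbabilityTheory

namespace MeasurableSpace

variable {Ω : Type*}

theorem isPiSystem_image2_inter (m₁ m₂ : MeasurableSpace Ω) :
    IsPiSystem (Set.image2 (· ∩ ·) {s | MeasurableSet[m₁] s} {s | MeasurableSet[m₂] s}) := by
  rintro _ ⟨A, hA, B, hB, rfl⟩ _ ⟨A', hA', B', hB', rfl⟩ -
  exact ⟨A ∩ A', hA.inter hA', B ∩ B', hB.inter hB', (Set.inter_inter_inter_comm A B A' B').symm⟩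

theorem generateFrom_image2_inter (m₁ m₂ : MeasurableSpace Ω) :
    generateFrom (Set.image2 (· ∩ ·) {s | MeasurableSet[m₁] s} {s | MeasurableSet[m₂] s})
      = m₁ ⊔ m₂ := by
  refine le_antisymm (generateFrom_le ?_) (sup_le ?_ ?_)
  · rintro _ ⟨A, hA, B, hB, rfl⟩
    exact (le_sup_left (b := m₂) A hA).inter (le_sup_right (a := m₁) B hB)
  · exact fun A hA ↦ measurableSet_generateFrom ⟨A, hA, Set.univ, .univ, Set.inter_univ A⟩
  · exact fun B hB ↦ measurableSet_generateFrom ⟨Set.univ, .univ, B, hB, Set.univ_inter B⟩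

end MeasurableSpace

namespace MeasureTheory

variable {α E : Type*} [NormedAddCommGroup E] [NormedSpace ℝ E]
  {m m₀ : MeasurableSpace α} {μ : Measure α}

theorem setIntegral_eq_setIntegral_of_isPiSystem {s : Set (Set α)} {f g : α → E}
    (hm : m ≤ m₀) (h_eq : m = MeasurableSpace.generateFrom s) (h_inter : IsPiSystem s)
    (hf : Integrable f μ) (hg : Integrable g μ) (h_univ : ∫ x, f x ∂μ = ∫ x, g x ∂μ)
    (basic : ∀ t ∈ s, ∫ x in t, f x ∂μ = ∫ x in t, g x ∂μ) :
    ∀ t, MeasurableSet[m] t → ∫ x in t, f x ∂μ = ∫ x in t, g x ∂μ := by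
  refine MeasurableSpace.induction_on_inter h_eq h_inter (by simp) basic ?_ ?_
  · intro t ht h
    rw [setIntegral_compl (hm t ht) hf, setIntegral_compl (hm t ht) hg, h, h_univ]
  · intro t ht_disj ht h
    rw [integral_iUnion (fun i ↦ hm _ (ht i)) ht_disj hf.integrableOn,
      integral_iUnion (fun i ↦ hm _ (ht i)) ht_disj hg.integrableOn]
    exact tsum_congr h

theorem integral_mul_condExp_of_stronglyMeasurable (hm : m ≤ m₀) [SigmaFinite (μ.trim hm)]
    {f g : α → ℝ} (hf : StronglyMeasurable[m] f) (hfg : Integrable (f * g) μ)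
    (hg : Integrable g μ) :
    ∫ x, f x * μ[g|m] x ∂μ = ∫ x, f x * g x ∂μ :=
  (integral_congr_ae (condExp_mul_of_stronglyMeasurable_left hf hfg hg)).symm.trans
    (integral_condExp hm)

end MeasureTheory

namespace ProbabilityTheory

variable {Ω : Type*} {m' m₁ m₂ mΩ : MeasurableSpace Ω} [StandardBorelSpace Ω]
  {hm' : m' ≤ mΩ} {μ : Measure Ω} [IsFiniteMeasure μ]

theorem CondIndep.sup_left_conditioning (h : CondIndep m' m₁ m₂ hm' μ) (hm₁ : m₁ ≤ mΩ)
    (hm₂ : m₂ ≤ mΩ) : CondIndep m' (m₁ ⊔ m') m₂ hm' μ := by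
  rw [condIndep_iff _ _ _ _ hm₁ hm₂] at h
  refine CondIndepSets.condIndep (sup_le hm₁ hm') hm₂
    (MeasurableSpace.isPiSystem_image2_inter m₁ m') (@MeasurableSpace.isPiSystem_measurableSet Ω m₂)
    (MeasurableSpace.generateFrom_image2_inter m₁ m').symm
    (@MeasurableSpace.generateFrom_measurableSet Ω m₂).symm ?_
  rw [condIndepSets_iff]
  · rintro _ A ⟨T, hT, B, hB, rfl⟩ hA
    have hTB : μ⟦T ∩ B|m'⟧ =ᵐ[μ] B.indicator (μ⟦T|m'⟧) := by
      rw [Set.inter_comm, ← Set.indicator_indicator]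
      exact condExp_indicator ((integrable_const 1).indicator (hm₁ T hT)) hB
    have hTBA : μ⟦T ∩ B ∩ A|m'⟧ =ᵐ[μ] B.indicator (μ⟦T ∩ A|m'⟧) := by
      rw [Set.inter_right_comm, Set.inter_comm, ← Set.indicator_indicator]
      exact condExp_indicator ((integrable_const 1).indicator ((hm₁ T hT).inter (hm₂ A hA))) hB
    filter_upwards [hTB, hTBA, h T A hT hA] with ω hTB hTBA hTA
    by_cases hω : ω ∈ B <;> simp [hω, hTB, hTBA, hTA]
  · rintro _ ⟨T, hT, B, hB, rfl⟩
    exact (hm₁ T hT).inter (hm' B hB)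
  · exact fun s hs ↦ hm₂ s hs

theorem CondIndep.condExp_indicator_ae_eq_of_le (h : CondIndep m' m₁ m₂ hm' μ) (hm'₁ : m' ≤ m₁)
    (hm₁ : m₁ ≤ mΩ) (hm₂ : m₂ ≤ mΩ) {A : Set Ω} (hA : MeasurableSet[m₂] A) :
    μ⟦A|m₁⟧ =ᵐ[μ] μ⟦A|m'⟧ := by
  rw [condIndep_iff _ _ _ _ hm₁ hm₂] at h
  refine (ae_eq_condExp_of_forall_setIntegral_eq hm₁ ((integrable_const 1).indicator (hm₂ A hA))
    (fun _ _ _ ↦ integrable_condExp.integrableOn) (fun C hC _ ↦ ?_)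
    (stronglyMeasurable_condExp.mono hm'₁).aestronglyMeasurable).symm
  calc ∫ x in C, (μ⟦A|m'⟧) x ∂μ = ∫ x, (μ⟦A|m'⟧) x * C.indicator (fun _ ↦ (1 : ℝ)) x ∂μ := by
        rw [← integral_indicator (hm₁ C hC)]
        congr with x
        by_cases hx : x ∈ C <;> simp [hx]
    _ = ∫ x, (μ⟦A|m'⟧) x * (μ⟦C|m'⟧) x ∂μ := by
        refine (integral_mul_condExp_of_stronglyMeasurable hm' stronglyMeasurable_condExp ?_
          ((integrable_const 1).indicator (hm₁ C hC))).symm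
        exact integrable_condExp.mul_bdd (c := 1)
          (stronglyMeasurable_const.indicator (hm₁ C hC)).aestronglyMeasurable
          (.of_forall fun x ↦ (norm_indicator_le_norm_self _ x).trans norm_one.le)
    _ = ∫ x, (μ⟦C ∩ A|m'⟧) x ∂μ := by
        refine integral_congr_ae ?_
        filter_upwards [h C A hC hA] with x hx
        rw [hx, Pi.mul_apply, mul_comm]
    _ = ∫ x in C, A.indicator (fun _ ↦ (1 : ℝ)) x ∂μ := by
        rw [integral_condExp hm', integral_indicator ((hm₁ C hC).inter (hm₂ A hA)),
          setIntegral_indicator (hm₂ A hA)]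

theorem CondIndep.condExp_sup_ae_eq (h : CondIndep m' m₁ m₂ hm' μ) (hm₁ : m₁ ≤ mΩ)
    (hm₂ : m₂ ≤ mΩ) {f : Ω → ℝ} (hf : StronglyMeasurable[m₁ ⊔ m'] f) (hf_int : Integrable f μ) :
    μ[f|m₂ ⊔ m'] =ᵐ[μ] μ[f|m'] := by
  have hM : m₁ ⊔ m' ≤ mΩ := sup_le hm₁ hm'
  have hm : m₂ ⊔ m' ≤ mΩ := sup_le hm₂ hm'
  refine (ae_eq_condExp_of_forall_setIntegral_eq hm hf_int
    (fun _ _ _ ↦ integrable_condExp.integrableOn) (fun t ht _ ↦ ?_)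
    (stronglyMeasurable_condExp.mono (le_sup_right (a := m₂))).aestronglyMeasurable).symm
  refine setIntegral_eq_setIntegral_of_isPiSystem hm
    (MeasurableSpace.generateFrom_image2_inter m₂ m').symm
    (MeasurableSpace.isPiSystem_image2_inter m₂ m') integrable_condExp hf_int
    (integral_condExp hm') ?_ t ht
  rintro _ ⟨A, hA, B, hB, rfl⟩
  have hA_eq : μ⟦A|m₁ ⊔ m'⟧ =ᵐ[μ] μ⟦A|m'⟧ :=
    (h.sup_left_conditioning hm₁ hm₂).condExp_indicator_ae_eq_of_le le_sup_right hM hm₂ hA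
  have hA_le : ∀ᵐ x ∂μ, ‖B.indicator (μ⟦A|m'⟧) x‖ ≤ 1 := by
    filter_upwards [ae_bdd_abs_condExp_of_ae_bdd_abs (m := m') (R := (1 : ℝ))
      (f := A.indicator fun _ ↦ (1 : ℝ)) (.of_forall fun x ↦ by by_cases hx : x ∈ A <;> simp [hx])]
      with x hx
    exact (norm_indicator_le_norm_self _ x).trans hx
  have h_inter : ∀ u : Ω → ℝ,
      ∫ x in A ∩ B, u x ∂μ = ∫ x, B.indicator u x * A.indicator (fun _ ↦ (1 : ℝ)) x ∂μ := by
    intro u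
    rw [← integral_indicator ((hm₂ A hA).inter (hm' B hB))]
    congr with x
    by_cases hxA : x ∈ A <;> by_cases hxB : x ∈ B <;> simp [hxA, hxB]
  have h_int : ∀ u : Ω → ℝ, Integrable u μ →
      Integrable (B.indicator u * A.indicator (fun _ ↦ (1 : ℝ))) μ := fun u hu ↦
    (hu.indicator (hm' B hB)).mul_bdd (c := 1)
      (stronglyMeasurable_const.indicator (hm₂ A hA)).aestronglyMeasurable
      (.of_forall fun x ↦ (norm_indicator_le_norm_self _ x).trans norm_one.le)
  calc ∫ x in A ∩ B, μ[f|m'] x ∂μ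
      = ∫ x, B.indicator (μ[f|m']) x * A.indicator (fun _ ↦ (1 : ℝ)) x ∂μ := h_inter _
    _ = ∫ x, B.indicator (μ[f|m']) x * (μ⟦A|m'⟧) x ∂μ :=
        (integral_mul_condExp_of_stronglyMeasurable hm' (stronglyMeasurable_condExp.indicator hB)
          (h_int _ integrable_condExp) ((integrable_const 1).indicator (hm₂ A hA))).symm
    _ = ∫ x, B.indicator (μ⟦A|m'⟧) x * μ[f|m'] x ∂μ := by
        congr with x
        by_cases hxB : x ∈ B <;> simp [hxB, mul_comm]
    _ = ∫ x, B.indicator (μ⟦A|m'⟧) x * f x ∂μ :=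
        integral_mul_condExp_of_stronglyMeasurable hm' (stronglyMeasurable_condExp.indicator hB)
          (hf_int.bdd_mul
            ((stronglyMeasurable_condExp.indicator hB).mono hm').aestronglyMeasurable hA_le) hf_int
    _ = ∫ x, B.indicator f x * (μ⟦A|m'⟧) x ∂μ := by
        congr with x
        by_cases hxB : x ∈ B <;> simp [hxB, mul_comm]
    _ = ∫ x, B.indicator f x * (μ⟦A|m₁ ⊔ m'⟧) x ∂μ := by
        refine integral_congr_ae ?_
        filter_upwards [hA_eq] with x hx
        rw [hx]
    _ = ∫ x, B.indicator f x * A.indicator (fun _ ↦ (1 : ℝ)) x ∂μ :=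
        integral_mul_condExp_of_stronglyMeasurable hM (hf.indicator (le_sup_right (a := m₁) B hB))
          (h_int _ hf_int) ((integrable_const 1).indicator (hm₂ A hA))
    _ = ∫ x in A ∩ B, f x ∂μ := (h_inter f).symm

end ProbabilityTheory

theorem residual_cond_moment_indep_of_treatment_general {Ω E S : Type*}
    [mΩ : MeasurableSpace Ω] [StandardBorelSpace Ω]
    [mE : MeasurableSpace E] [mS : MeasurableSpace S]
    (μ : Measure Ω) [IsProbabilityMeasure μ]
    (Z : Ω → E) (D : Ω → S) (hZ : Measurable Z) (hD : Measurable D)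
    (Y : Ω → ℝ) (hY : Measurable Y)
    (hindep : CondIndepFun (MeasurableSpace.comap Z mE) (measurable_iff_comap_le.mp hZ) Y D μ)
    (g : E → ℝ) (hg : Measurable g) (r : ℕ)
    (hint : Integrable (fun ω => (Y ω - g (Z ω)) ^ r) μ) :
    μ[fun ω => (Y ω - g (Z ω)) ^ r|MeasurableSpace.comap D mS ⊔ MeasurableSpace.comap Z mE]
      =ᵐ[μ] μ[fun ω => (Y ω - g (Z ω)) ^ r|MeasurableSpace.comap Z mE] := by
  have h : CondIndep (MeasurableSpace.comap Z mE) (MeasurableSpace.comap Y inferInstance)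
      (MeasurableSpace.comap D mS) hZ.comap_le μ :=
    (condIndepFun_iff_condIndep _ _ Y D μ).mp hindep
  have hY' : Measurable[MeasurableSpace.comap Y inferInstance ⊔ MeasurableSpace.comap Z mE] Y :=
    measurable_iff_comap_le.mpr le_sup_left
  have hZ' : Measurable[MeasurableSpace.comap Y inferInstance ⊔ MeasurableSpace.comap Z mE] Z :=
    measurable_iff_comap_le.mpr le_sup_right
  exact h.condExp_sup_ae_eq hY.comap_le hD.comap_le
    ((hY'.sub (hg.comp hZ')).pow_const r).stronglyMeasurable hint

/-- Proposition 1: under conditional independence of `Y` and `D` given `σ(Z)`, the conditional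
`r`-th moment of the residual `ξ = Y - g(Z)` given `(D, Z)` does not depend on `D`:
`E[(Y - g(Z))^r | σ(D) ⊔ σ(Z)] = E[(Y - g(Z))^r | σ(Z)]` a.s. -/
theorem residual_cond_moment_indep_of_treatment {Ω E S : Type*}
    [mΩ : MeasurableSpace Ω] [StandardBorelSpace Ω] [Nonempty Ω]
    [mE : MeasurableSpace E] [mS : MeasurableSpace S]
    (μ : Measure Ω) [IsProbabilityMeasure μ]
    (Z : Ω → E) (D : Ω → S) (hZ : Measurable Z) (hD : Measurable D)
    (Y : Ω → ℝ) (hY : Measurable Y)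
    (hindep : CondIndepFun (MeasurableSpace.comap Z mE) (measurable_iff_comap_le.mp hZ) Y D μ)
    (g : E → ℝ) (hg : Measurable g) (r : ℕ) (hr : 1 ≤ r)
    (hint : Integrable (fun ω => (Y ω - g (Z ω)) ^ r) μ) :
    μ[fun ω => (Y ω - g (Z ω)) ^ r|MeasurableSpace.comap D mS ⊔ MeasurableSpace.comap Z mE]
      =ᵐ[μ] μ[fun ω => (Y ω - g (Z ω)) ^ r|MeasurableSpace.comap Z mE] :=
  residual_cond_moment_indep_of_treatment_general (mΩ := mΩ) (mE := mE) (mS := mS) μ Z D hZ hD Y hY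
    hindep g hg r hint
end
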